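/- Let α > 0, β ∈ ℝ. There exists a unique κ_0 ∈ (α/2, ∞) solving š_β(κ) = φ_0(κ), and for every a > 0 the unique solution κ_a of š_β(κ) = φ_a(κ) on (α/2,∞) satisfies κ_a < κ_0. Consequently −κ_0² is a lower bound for the eigenvalue −κ_a² for all a > 0, and −κ_a² → −κ_0² as a → 0⁺. -/

import Mathlib

open Real MeasureTheory Set Filter Topology

noncomputable def sBeta (β κ : ℝ) : ℝ :=
  β + (1 / (2 * π)) * (Real.log (κ / 2) + Real.eulerMascheroniConstant)

noncomputable def phiA (α a κ : ℝ) : ℝ :=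
  (α / (4 * π)) * ∫ p : ℝ,
    Real.exp (-2 * a * Real.sqrt (p ^ 2 + κ ^ 2)) /
      ((2 * Real.sqrt (p ^ 2 + κ ^ 2) - α) * Real.sqrt (p ^ 2 + κ ^ 2))

noncomputable def phi0 (α κ : ℝ) : ℝ :=
  (α / (4 * π)) * ∫ p : ℝ,
    1 / ((2 * Real.sqrt (p ^ 2 + κ ^ 2) - α) * Real.sqrt (p ^ 2 + κ ^ 2))

noncomputable def besselK0 (x : ℝ) : ℝ := ∫ t in Set.Ioi (0:ℝ), Real.exp (-x * Real.cosh t)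

noncomputable def psiA (α a κ : ℝ) : ℝ :=
  (α / π) * ∫ p in Set.Ioi (0:ℝ),
    p * Real.exp (-2 * a * Real.sqrt (p ^ 2 + κ ^ 2)) /
      ((2 * Real.sqrt (p ^ 2 + κ ^ 2) - α) * Real.sqrt (p ^ 2 + κ ^ 2))

noncomputable def psiC (α a κ : ℝ) : ℝ :=
  (α / π) * ∫ t in Set.Ioi κ, Real.exp (-2 * t * a) / (2 * t - α)


/-! The integrand of `φ_a` is positive, strictly decreasing in `κ` and in `a`, and bounded by a
multiple of `(p² + κ²)⁻¹`. Hence `φ_a` is continuous and strictly decreasing in `κ`, `φ_a < φ_0`,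
and `φ_a → φ_0` as `a → 0⁺` by dominated convergence. So every `š_β − φ_a` is strictly increasing
on `(α/2, ∞)`, and `š_β − φ_0` runs from `−∞` (`φ_0` blows up logarithmically at `α/2`) to `+∞`,
so it has exactly one zero `κ₀`. At `κ_a` we have `š_β − φ_0 < š_β − φ_a = 0`, so `κ_a < κ₀`; and
zeros of strictly increasing functions converging pointwise converge to the zero of the limit. -/

/-- `phiA α a κ` is, by definition, `α / (4 * π) * ∫ p, phiKernel α a √(p ^ 2 + κ ^ 2)`. -/
noncomputable def phiKernel (α a s : ℝ) : ℝ :=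
  exp (-2 * a * s) / ((2 * s - α) * s)

lemma phi0_eq_phiA_zero (α κ : ℝ) : phi0 α κ = phiA α 0 κ := by
  simp [phi0, phiA]

section Kernel

variable {α a b s : ℝ}

lemma phiKernel_denom_pos (hα : 0 ≤ α) (hs : α / 2 < s) : 0 < (2 * s - α) * s := by
  have : 0 < 2 * s - α := by linarith
  have : 0 < s := by linarith
  positivity

lemma phiKernel_pos (hα : 0 ≤ α) (hs : α / 2 < s) : 0 < phiKernel α a s :=
  div_pos (exp_pos _) (phiKernel_denom_pos hα hs)

lemma phiKernel_strictAntiOn (hα : 0 ≤ α) (ha : 0 ≤ a) :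
    StrictAntiOn (phiKernel α a) (Ioi (α / 2)) := by
  intro s (hs : α / 2 < s) t _ hst
  have hs0 : 0 < s := by linarith
  have hden := phiKernel_denom_pos hα hs
  calc exp (-2 * a * t) / ((2 * t - α) * t) ≤ exp (-2 * a * s) / ((2 * t - α) * t) :=
        div_le_div_of_nonneg_right (exp_le_exp.mpr (by nlinarith)) (by nlinarith)
    _ < exp (-2 * a * s) / ((2 * s - α) * s) := by gcongr; linarith

lemma phiKernel_lt_phiKernel_of_lt (hα : 0 ≤ α) (hs : α / 2 < s) (hab : a < b) :
    phiKernel α b s < phiKernel α a s := by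
  have : 0 < s := by linarith
  exact div_lt_div_of_pos_right (exp_lt_exp.mpr (by nlinarith)) (phiKernel_denom_pos hα hs)

lemma phiKernel_le_of_le {κ : ℝ} (hα : 0 ≤ α) (ha : 0 ≤ a) (hκ : α / 2 < κ) (hκs : κ ≤ s) :
    phiKernel α a s ≤ κ / (2 * κ - α) / s ^ 2 := by
  have hs : α / 2 < s := hκ.trans_le hκs
  have hs0 : 0 < s := by linarith
  have hδ : 0 < 2 * κ - α := by linarith
  calc phiKernel α a s ≤ 1 / ((2 * s - α) * s) :=
        div_le_div_of_nonneg_right (exp_le_one_iff.mpr (by nlinarith))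
          (phiKernel_denom_pos hα hs).le
    _ ≤ κ / (2 * κ - α) / s ^ 2 := by
        rw [div_div, div_le_div_iff₀ (phiKernel_denom_pos hα hs) (mul_pos hδ (pow_pos hs0 2))]
        nlinarith [mul_le_mul_of_nonneg_left hκs (mul_nonneg hα hs0.le)]

end Kernel

section Integrand

variable {α a κ : ℝ}

lemma le_sqrt_sq_add_sq (p κ : ℝ) : κ ≤ √(p ^ 2 + κ ^ 2) :=
  Real.le_sqrt_of_sq_le (by nlinarith)

lemma sqrt_sq_add_sq_le {p : ℝ} (hp : 0 ≤ p) (hκ : 0 ≤ κ) : √(p ^ 2 + κ ^ 2) ≤ p + κ :=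
  (Real.sqrt_le_left (by positivity)).mpr (by nlinarith)

lemma integrable_inv_sq_add_sq (hκ : κ ≠ 0) : Integrable fun p : ℝ => (p ^ 2 + κ ^ 2)⁻¹ := by
  refine ((integrable_inv_one_add_sq.comp_div hκ).const_mul (κ ^ 2)⁻¹).congr
    (Eventually.of_forall fun p => ?_)
  field_simp
  ring

lemma integral_univ_inv_sq_add_sq (hκ : 0 < κ) : ∫ p : ℝ, (p ^ 2 + κ ^ 2)⁻¹ = π / κ := by
  have h (p : ℝ) : (p ^ 2 + κ ^ 2)⁻¹ = (κ ^ 2)⁻¹ * (1 + (p / κ) ^ 2)⁻¹ := by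
    field_simp
    ring
  simp_rw [h]
  rw [integral_const_mul, Measure.integral_comp_div (fun y => (1 + y ^ 2)⁻¹) κ,
    integral_univ_inv_one_add_sq, abs_of_pos hκ, smul_eq_mul]
  field_simp

lemma continuous_phiKernel_sqrt (hα : 0 ≤ α) (hκ : α / 2 < κ) :
    Continuous fun p : ℝ => phiKernel α a √(p ^ 2 + κ ^ 2) :=
  Continuous.div (by fun_prop) (by fun_prop) fun _ =>
    (phiKernel_denom_pos hα (hκ.trans_le (le_sqrt_sq_add_sq _ κ))).ne'

lemma phiKernel_sqrt_le (hα : 0 ≤ α) (ha : 0 ≤ a) (hκ : α / 2 < κ) (p : ℝ) :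
    phiKernel α a √(p ^ 2 + κ ^ 2) ≤ κ / (2 * κ - α) * (p ^ 2 + κ ^ 2)⁻¹ := by
  refine (phiKernel_le_of_le hα ha hκ (le_sqrt_sq_add_sq p κ)).trans_eq ?_
  rw [Real.sq_sqrt (by positivity), div_eq_mul_inv (κ / (2 * κ - α))]

lemma phiKernel_sqrt_lt_of_lt {κ' : ℝ} (hα : 0 ≤ α) (ha : 0 ≤ a) (hκ : α / 2 < κ)
    (hκκ' : κ < κ') (p : ℝ) : phiKernel α a √(p ^ 2 + κ' ^ 2) < phiKernel α a √(p ^ 2 + κ ^ 2) :=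
  phiKernel_strictAntiOn hα ha (hκ.trans_le (le_sqrt_sq_add_sq p κ))
    ((hκ.trans hκκ').trans_le (le_sqrt_sq_add_sq p κ'))
    (Real.sqrt_lt_sqrt (by positivity) (by nlinarith))

lemma integrable_phiKernel_sqrt (hα : 0 ≤ α) (ha : 0 ≤ a) (hκ : α / 2 < κ) :
    Integrable fun p : ℝ => phiKernel α a √(p ^ 2 + κ ^ 2) := by
  refine Integrable.mono' ((integrable_inv_sq_add_sq (by linarith)).const_mul (κ / (2 * κ - α)))
    (continuous_phiKernel_sqrt hα hκ).aestronglyMeasurable (Eventually.of_forall fun p => ?_)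
  rw [Real.norm_eq_abs, abs_of_pos (phiKernel_pos hα (hκ.trans_le (le_sqrt_sq_add_sq _ κ)))]
  exact phiKernel_sqrt_le hα ha hκ p

end Integrand

lemma integral_lt_integral_of_forall_lt {X : Type*} [MeasurableSpace X] {μ : Measure X}
    [NeZero μ] {f g : X → ℝ} (hf : Integrable f μ) (hg : Integrable g μ) (h : ∀ x, f x < g x) :
    ∫ x, f x ∂μ < ∫ x, g x ∂μ := by
  have hsupp : Function.support (fun x => g x - f x) = univ :=
    eq_univ_of_forall fun x => (sub_pos.mpr (h x)).ne'
  have := (integral_pos_iff_support_of_nonneg (fun x => (sub_pos.mpr (h x)).le) (hg.sub hf)).mpr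
    (by rw [hsupp]; exact Measure.measure_univ_pos.mpr (NeZero.ne μ))
  rw [integral_sub hg hf] at this
  linarith

section PhiA

variable {α a κ : ℝ}

lemma phiA_le (hα : 0 ≤ α) (ha : 0 ≤ a) (hκ : α / 2 < κ) :
    phiA α a κ ≤ α / (4 * (2 * κ - α)) := by
  have hκ0 : 0 < κ := by linarith
  have hint := integral_mono (integrable_phiKernel_sqrt hα ha hκ)
    ((integrable_inv_sq_add_sq hκ0.ne').const_mul _) (phiKernel_sqrt_le hα ha hκ)
  rw [integral_const_mul, integral_univ_inv_sq_add_sq hκ0] at hint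
  calc phiA α a κ ≤ α / (4 * π) * (κ / (2 * κ - α) * (π / κ)) :=
        mul_le_mul_of_nonneg_left hint (by positivity)
    _ = α / (4 * (2 * κ - α)) := by field_simp

lemma phiA_nonneg (hα : 0 ≤ α) (hκ : α / 2 < κ) : 0 ≤ phiA α a κ :=
  mul_nonneg (by positivity) (integral_nonneg fun p =>
    (phiKernel_pos hα (hκ.trans_le (le_sqrt_sq_add_sq p κ))).le)

lemma phiA_strictAntiOn (hα : 0 < α) (ha : 0 ≤ a) : StrictAntiOn (phiA α a) (Ioi (α / 2)) := by
  intro κ (hκ : α / 2 < κ) κ' (hκ' : α / 2 < κ') hκκ'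
  exact mul_lt_mul_of_pos_left (integral_lt_integral_of_forall_lt
    (integrable_phiKernel_sqrt hα.le ha hκ') (integrable_phiKernel_sqrt hα.le ha hκ)
    (phiKernel_sqrt_lt_of_lt hα.le ha hκ hκκ')) (by positivity)

lemma phiA_strictAntiOn_param (hα : 0 < α) (hκ : α / 2 < κ) :
    StrictAntiOn (fun a => phiA α a κ) (Ici 0) := by
  intro a (ha : 0 ≤ a) b (hb : 0 ≤ b) hab
  exact mul_lt_mul_of_pos_left (integral_lt_integral_of_forall_lt
    (integrable_phiKernel_sqrt hα.le hb hκ) (integrable_phiKernel_sqrt hα.le ha hκ) fun p =>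
      phiKernel_lt_phiKernel_of_lt hα.le (hκ.trans_le (le_sqrt_sq_add_sq p κ)) hab)
    (by positivity)

lemma phiA_lt_phi0 (hα : 0 < α) (hκ : α / 2 < κ) (ha : 0 < a) : phiA α a κ < phi0 α κ := by
  rw [phi0_eq_phiA_zero]
  exact phiA_strictAntiOn_param hα hκ (mem_Ici.mpr le_rfl) (mem_Ici.mpr ha.le) ha

lemma phiA_continuousOn (hα : 0 ≤ α) (ha : 0 ≤ a) : ContinuousOn (phiA α a) (Ioi (α / 2)) := by
  intro κ (hκ : α / 2 < κ)
  obtain ⟨κ₁, hκ₁, hκ₁κ⟩ := exists_between hκ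
  refine (continuousAt_const.mul (continuousAt_of_dominated
    (F := fun x p => phiKernel α a √(p ^ 2 + x ^ 2))
    (bound := fun p => phiKernel α a √(p ^ 2 + κ₁ ^ 2)) ?_ ?_
    (integrable_phiKernel_sqrt hα ha hκ₁) ?_)).continuousWithinAt
  · filter_upwards [Ioi_mem_nhds hκ₁κ] with x hx
    exact (continuous_phiKernel_sqrt hα (hκ₁.trans hx)).aestronglyMeasurable
  · filter_upwards [Ioi_mem_nhds hκ₁κ] with x (hx : κ₁ < x)
    refine Eventually.of_forall fun p => ?_
    rw [Real.norm_eq_abs, abs_of_pos (phiKernel_pos hα ((hκ₁.trans hx).trans_le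
      (le_sqrt_sq_add_sq p x)))]
    exact (phiKernel_sqrt_lt_of_lt hα ha hκ₁ hx p).le
  · refine Eventually.of_forall fun p => ?_
    exact ContinuousAt.div (by fun_prop) (by fun_prop)
      (phiKernel_denom_pos hα (hκ.trans_le (le_sqrt_sq_add_sq p κ))).ne'

lemma phiA_continuousOn_param (hα : 0 ≤ α) (hκ : α / 2 < κ) :
    ContinuousOn (fun a => phiA α a κ) (Ici 0) := by
  refine ContinuousOn.mul continuousOn_const (continuousOn_of_dominated
    (F := fun a p => phiKernel α a √(p ^ 2 + κ ^ 2))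
    (bound := fun p => phiKernel α 0 √(p ^ 2 + κ ^ 2)) (fun a _ => ?_) (fun a ha => ?_)
    (integrable_phiKernel_sqrt hα le_rfl hκ) (Eventually.of_forall fun p => ?_))
  · exact (continuous_phiKernel_sqrt hα hκ).aestronglyMeasurable
  · refine Eventually.of_forall fun p => ?_
    have hs := hκ.trans_le (le_sqrt_sq_add_sq p κ)
    rw [Real.norm_eq_abs, abs_of_pos (phiKernel_pos hα hs)]
    rcases (show (0:ℝ) ≤ a from ha).eq_or_lt with rfl | ha
    · exact le_rfl
    · exact (phiKernel_lt_phiKernel_of_lt hα hs ha).le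
  · exact (Continuous.div_const (by fun_prop) _).continuousOn

lemma tendsto_phiA_phi0 (hα : 0 ≤ α) (hκ : α / 2 < κ) :
    Tendsto (fun a => phiA α a κ) (𝓝[>] 0) (𝓝 (phi0 α κ)) := by
  rw [phi0_eq_phiA_zero]
  exact ((phiA_continuousOn_param hα hκ) 0 (mem_Ici.mpr le_rfl)).mono Ioi_subset_Ici_self

end PhiA

section Phi0

variable {α κ : ℝ}

lemma tendsto_phi0_atTop (hα : 0 ≤ α) : Tendsto (phi0 α) atTop (𝓝 0) := by
  have hbound : Tendsto (fun κ => α / (4 * (2 * κ - α))) atTop (𝓝 0) :=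
    tendsto_const_nhds.div_atTop (Tendsto.const_mul_atTop (by norm_num)
      (tendsto_atTop_add_const_right _ _ (tendsto_id.const_mul_atTop two_pos)))
  refine tendsto_of_tendsto_of_tendsto_of_le_of_le' tendsto_const_nhds hbound ?_ ?_
  · filter_upwards [eventually_gt_atTop (α / 2)] with κ hκ
    exact phi0_eq_phiA_zero α κ ▸ phiA_nonneg hα hκ
  · filter_upwards [eventually_gt_atTop (α / 2)] with κ hκ
    exact phi0_eq_phiA_zero α κ ▸ phiA_le hα le_rfl hκ

/-- On `0 < p ≤ 1` the integrand of `phi0` is at least `((1 + κ) * (2 * p + 2 * κ - α))⁻¹`. -/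
lemma log_le_phi0 (hα : 0 < α) (hκ : α / 2 < κ) :
    α / (8 * π * (1 + κ)) * log (1 + 2 / (2 * κ - α)) ≤ phi0 α κ := by
  set δ := 2 * κ - α
  have hδ : 0 < δ := by linarith
  have hκ0 : 0 < κ := by linarith
  have hint := integrable_phiKernel_sqrt hα.le le_rfl hκ
  have hcont : ContinuousOn (fun p : ℝ => (1 + κ)⁻¹ * (2 * p + δ)⁻¹) (Icc 0 1) :=
    continuousOn_const.mul ((by fun_prop : Continuous fun p : ℝ => 2 * p + δ).continuousOn.inv₀
      fun p hp => by have := hp.1; positivity)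
  have hbound : ∀ p ∈ Ioc (0 : ℝ) 1,
      (1 + κ)⁻¹ * (2 * p + δ)⁻¹ ≤ phiKernel α 0 √(p ^ 2 + κ ^ 2) := by
    rintro p ⟨hp0, hp1⟩
    calc (1 + κ)⁻¹ * (2 * p + δ)⁻¹ ≤ ((2 * (p + κ) - α) * (p + κ))⁻¹ := by
          rw [← mul_inv, mul_comm]
          gcongr
          · nlinarith
          · linarith
      _ = phiKernel α 0 (p + κ) := by simp [phiKernel]
      _ ≤ phiKernel α 0 √(p ^ 2 + κ ^ 2) :=
        (phiKernel_strictAntiOn hα.le le_rfl).antitoneOn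
          (hκ.trans_le (le_sqrt_sq_add_sq p κ)) (show α / 2 < p + κ by linarith)
          (sqrt_sq_add_sq_le hp0.le hκ0.le)
  have hlog : ∫ p in (0 : ℝ)..1, (1 + κ)⁻¹ * (2 * p + δ)⁻¹ =
      (1 + κ)⁻¹ * (2⁻¹ * log (1 + 2 / δ)) := by
    rw [intervalIntegral.integral_const_mul,
      intervalIntegral.integral_comp_mul_add (fun x => x⁻¹) two_ne_zero,
      integral_inv_of_pos (by positivity) (by positivity), smul_eq_mul]
    congr 3
    field_simp
    ring
  calc α / (8 * π * (1 + κ)) * log (1 + 2 / δ)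
      = α / (4 * π) * ∫ p in (0 : ℝ)..1, (1 + κ)⁻¹ * (2 * p + δ)⁻¹ := by
        rw [hlog]
        field_simp
        ring
    _ ≤ α / (4 * π) * ∫ p in Ioc 0 1, phiKernel α 0 √(p ^ 2 + κ ^ 2) := by
        rw [intervalIntegral.integral_of_le zero_le_one]
        exact mul_le_mul_of_nonneg_left (setIntegral_mono_on
          (hcont.integrableOn_Icc.mono_set Ioc_subset_Icc_self) hint.integrableOn
          measurableSet_Ioc hbound) (by positivity)
    _ ≤ α / (4 * π) * ∫ p, phiKernel α 0 √(p ^ 2 + κ ^ 2) :=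
        mul_le_mul_of_nonneg_left (setIntegral_le_integral hint (Eventually.of_forall
          fun p => (phiKernel_pos hα.le (hκ.trans_le (le_sqrt_sq_add_sq p κ))).le))
          (by positivity)
    _ = phi0 α κ := (phi0_eq_phiA_zero α κ).symm

lemma tendsto_phi0_nhdsGT (hα : 0 < α) : Tendsto (phi0 α) (𝓝[>] (α / 2)) atTop := by
  have hδ : Tendsto (fun κ => 2 * κ - α) (𝓝[>] (α / 2)) (𝓝[>] 0) := by
    refine tendsto_nhdsWithin_iff.mpr ⟨?_, eventually_nhdsWithin_of_forall
      fun κ (hκ : α / 2 < κ) => show 0 < 2 * κ - α by linarith⟩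
    convert ((by fun_prop : Continuous fun κ : ℝ => 2 * κ - α).tendsto (α / 2)).mono_left
      nhdsWithin_le_nhds using 2
    ring
  have hlog : Tendsto (fun κ => log (1 + 2 / (2 * κ - α))) (𝓝[>] (α / 2)) atTop := by
    simp_rw [div_eq_mul_inv (2 : ℝ)]
    exact tendsto_log_atTop.comp (tendsto_atTop_add_const_left _ 1
      ((tendsto_inv_nhdsGT_zero.comp hδ).const_mul_atTop two_pos))
  have hcoef : Tendsto (fun κ => α / (8 * π * (1 + κ))) (𝓝[>] (α / 2))
      (𝓝 (α / (8 * π * (1 + α / 2)))) :=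
    ((continuousAt_const.div (by fun_prop) (by positivity)).tendsto).mono_left
      nhdsWithin_le_nhds
  exact tendsto_atTop_mono' _ (eventually_nhdsWithin_of_forall fun κ hκ => log_le_phi0 hα hκ)
    (hcoef.pos_mul_atTop (by positivity) hlog)

end Phi0

lemma sBeta_strictMonoOn (β : ℝ) : StrictMonoOn (sBeta β) (Ioi 0) := by
  intro x (hx : 0 < x) y _ hxy
  have := log_lt_log (by positivity) (by linarith : x / 2 < y / 2)
  have : 0 < 1 / (2 * π) := by positivity
  unfold sBeta
  gcongr

lemma sBeta_continuousOn (β : ℝ) : ContinuousOn (sBeta β) (Ioi 0) := fun κ (hκ : 0 < κ) =>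
  have : ContinuousAt log (κ / 2) := continuousAt_log (by positivity)
  (by unfold sBeta; fun_prop : ContinuousAt (sBeta β) κ).continuousWithinAt

lemma tendsto_sBeta_atTop (β : ℝ) : Tendsto (sBeta β) atTop atTop :=
  tendsto_atTop_add_const_left _ β <| (tendsto_atTop_add_const_right _ _
    (tendsto_log_atTop.comp (tendsto_id.atTop_div_const two_pos))).const_mul_atTop (by positivity)

lemma sBeta_sub_phiA_strictMonoOn {α a : ℝ} (β : ℝ) (hα : 0 < α) (ha : 0 ≤ a) :
    StrictMonoOn (fun κ => sBeta β κ - phiA α a κ) (Ioi (α / 2)) := fun x hx y hy hxy =>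
  have hsub : Ioi (α / 2) ⊆ Ioi 0 := Ioi_subset_Ioi (by positivity)
  sub_lt_sub (sBeta_strictMonoOn β (hsub hx) (hsub hy) hxy) (phiA_strictAntiOn hα ha hx hy hxy)

lemma exists_zero_of_tendsto_nhdsGT_atBot {f : ℝ → ℝ} {c : ℝ} (hf : ContinuousOn f (Ioi c))
    (hc : Tendsto f (𝓝[>] c) atBot) (htop : Tendsto f atTop atTop) : ∃ x ∈ Ioi c, f x = 0 := by
  obtain ⟨x, hfx, hx⟩ := ((hc.eventually_lt_atBot 0).and self_mem_nhdsWithin).exists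
  obtain ⟨y, hfy, hxy⟩ := ((htop.eventually_gt_atTop 0).and (eventually_ge_atTop x)).exists
  obtain ⟨z, hz, hfz⟩ := intermediate_value_Icc hxy
    (hf.mono fun t ht => lt_of_lt_of_le hx ht.1) ⟨hfx.le, hfy.le⟩
  exact ⟨z, lt_of_lt_of_le hx hz.1, hfz⟩

lemma tendsto_of_strictMonoOn_of_tendsto {ι : Type*} {l : Filter ι} {c z₀ : ℝ}
    {f : ι → ℝ → ℝ} {f₀ : ℝ → ℝ} {z : ι → ℝ} (hf₀ : StrictMonoOn f₀ (Ioi c)) (hz₀ : z₀ ∈ Ioi c)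
    (hf₀z₀ : f₀ z₀ = 0)
    (hf : ∀ᶠ i in l, StrictMonoOn (f i) (Ioi c) ∧ z i ∈ Ioi c ∧ f i (z i) = 0)
    (hlim : ∀ x ∈ Ioi c, Tendsto (fun i => f i x) l (𝓝 (f₀ x))) : Tendsto z l (𝓝 z₀) := by
  refine tendsto_order.mpr ⟨fun x hx => ?_, fun x hx => ?_⟩
  · rcases le_or_gt x c with hxc | hxc
    · filter_upwards [hf] with i hi using hxc.trans_lt hi.2.1
    · have hneg : f₀ x < 0 := hf₀z₀ ▸ hf₀ hxc hz₀ hx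
      filter_upwards [hf, (hlim x hxc).eventually (gt_mem_nhds hneg)] with i ⟨hmono, hzi, hfzi⟩ hfx
      exact (hmono.lt_iff_lt hxc hzi).mp (hfzi ▸ hfx)
  · have hxc : x ∈ Ioi c := lt_trans hz₀ hx
    have hpos : 0 < f₀ x := hf₀z₀ ▸ hf₀ hz₀ hxc hx
    filter_upwards [hf, (hlim x hxc).eventually (lt_mem_nhds hpos)] with i ⟨hmono, hzi, hfzi⟩ hfx
    exact (hmono.lt_iff_lt hzi hxc).mp (hfzi ▸ hfx)

lemma exists_sBeta_eq_phi0 {α : ℝ} (β : ℝ) (hα : 0 < α) :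
    ∃ κ ∈ Ioi (α / 2), sBeta β κ = phi0 α κ := by
  have hα2 : α / 2 ∈ Ioi 0 := by simp only [mem_Ioi]; positivity
  have hcont : ContinuousOn (fun κ => sBeta β κ - phi0 α κ) (Ioi (α / 2)) := by
    simp only [phi0_eq_phiA_zero]
    exact ((sBeta_continuousOn β).mono (Ioi_subset_Ioi (le_of_lt hα2))).sub
      (phiA_continuousOn hα.le le_rfl)
  have hbot : Tendsto (fun κ => sBeta β κ - phi0 α κ) (𝓝[>] (α / 2)) atBot :=
    (((sBeta_continuousOn β).continuousAt (Ioi_mem_nhds hα2)).tendsto.mono_left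
      nhdsWithin_le_nhds).add_atBot (tendsto_neg_atTop_atBot.comp (tendsto_phi0_nhdsGT hα))
  have htop : Tendsto (fun κ => sBeta β κ - phi0 α κ) atTop atTop := by
    simpa only [sub_eq_add_neg] using
      (tendsto_sBeta_atTop β).atTop_add (tendsto_phi0_atTop hα.le).neg
  obtain ⟨κ, hκ, h⟩ := exists_zero_of_tendsto_nhdsGT_atBot hcont hbot htop
  exact ⟨κ, hκ, sub_eq_zero.mp h⟩

theorem stmt9 (α β : ℝ) (hα : 0 < α) (κ_ : ℝ → ℝ)
    (hκ : ∀ a : ℝ, 0 < a →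
      κ_ a ∈ Set.Ioi (α / 2) ∧ sBeta β (κ_ a) = phiA α a (κ_ a) ∧
      ∀ κ' ∈ Set.Ioi (α / 2), sBeta β κ' = phiA α a κ' → κ' = κ_ a) :
    ∃ κ0 : ℝ, (κ0 ∈ Set.Ioi (α / 2) ∧ sBeta β κ0 = phi0 α κ0) ∧
      (∀ κ' ∈ Set.Ioi (α / 2), sBeta β κ' = phi0 α κ' → κ' = κ0) ∧
      (∀ a : ℝ, 0 < a → κ_ a < κ0) ∧
      Tendsto (fun a => -(κ_ a) ^ 2) (𝓝[>] (0:ℝ)) (𝓝 (-κ0 ^ 2)) := by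
  obtain ⟨κ₀, hκ₀, hroot⟩ := exists_sBeta_eq_phi0 β hα
  have hmono₀ : StrictMonoOn (fun κ => sBeta β κ - phi0 α κ) (Ioi (α / 2)) := by
    simpa only [phi0_eq_phiA_zero] using sBeta_sub_phiA_strictMonoOn β hα le_rfl
  have hzero₀ : sBeta β κ₀ - phi0 α κ₀ = 0 := sub_eq_zero.mpr hroot
  refine ⟨κ₀, ⟨hκ₀, hroot⟩, fun κ hκ' h => hmono₀.injOn hκ' hκ₀ ?_, fun a ha => ?_, ?_⟩
  · simp only [h, hroot, sub_self]
  · obtain ⟨hmem, heq, -⟩ := hκ a ha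
    refine (hmono₀.lt_iff_lt hmem hκ₀).mp ?_
    linarith [phiA_lt_phi0 hα hmem ha]
  · have hlim : Tendsto κ_ (𝓝[>] 0) (𝓝 κ₀) :=
      tendsto_of_strictMonoOn_of_tendsto hmono₀ hκ₀ hzero₀
        (eventually_nhdsWithin_of_forall fun a (ha : 0 < a) =>
          ⟨sBeta_sub_phiA_strictMonoOn β hα ha.le, (hκ a ha).1, sub_eq_zero.mpr (hκ a ha).2.1⟩)
        fun x hx => tendsto_const_nhds.sub (tendsto_phiA_phi0 hα.le hx)
    exact (hlim.pow 2).neg
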